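/- Let G be the pseudograph with two nodes and n ≥ 1 parallel edges between them. Then the poset of tubings of G is isomorphic to the product of the poset of tubings of the complete simple graph Γ_n on n nodes with the poset of tubings of the complete graph Γ_2 on two nodes. -/

import Mathlib

/-!
The tubes of the banana are the two single nodes and the pieces consisting of both nodes and a
nonempty proper set `A` of edges. The latter correspond to the tubes of `Γ_n` with vertex set `A`
and the former to the two tubes of `Γ_2`; within each family compatibility is strict nesting
(two single nodes are never compatible), and a single node is compatible with every big tube.
All three graphs are connected, so a tubing is just a set of pairwise compatible tubes, and the
pairwise-compatible sets in a disjoint union of two families that are compatible across split as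
a product.
-/

/-- A pseudograph: finite-or-infinite multigraph with loops allowed,
    given by an endpoint map from edges to unordered pairs of vertices. -/
structure Pseudograph (V E : Type) where
  ends : E → Sym2 V

/-- A (not necessarily well-formed) subgraph datum: a set of vertices and a set of edges. -/
structure Piece (V E : Type) where
  verts : Set V
  edges : Set E

/-- Containment of subgraph data. -/
def Piece.Sub {V E : Type} (H K : Piece V E) : Prop :=
  H.verts ⊆ K.verts ∧ H.edges ⊆ K.edges

namespace Pseudograph

variable {V E : Type}

/-- The whole graph, as a piece. -/
def wholePiece : Piece V E := ⟨Set.univ, Set.univ⟩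

/-- Adjacency using only edges of the piece `H`. -/
def adjIn (G : Pseudograph V E) (H : Piece V E) (u w : V) : Prop :=
  ∃ e ∈ H.edges, G.ends e = s(u, w)

/-- The piece `H` is connected: nonempty vertex set, all vertices joined by walks in `H`. -/
def ConnectedPiece (G : Pseudograph V E) (H : Piece V E) : Prop :=
  H.verts.Nonempty ∧
    ∀ u ∈ H.verts, ∀ w ∈ H.verts, Relation.ReflTransGen (G.adjIn H) u w

/-- A tube: a proper connected subgraph containing at least one edge between
    every pair of its nodes whenever `G` has such an edge. -/
def IsTube (G : Pseudograph V E) (H : Piece V E) : Prop :=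
  (∀ e ∈ H.edges, ∀ v, v ∈ G.ends e → v ∈ H.verts) ∧
  G.ConnectedPiece H ∧
  H ≠ wholePiece ∧
  (∀ u ∈ H.verts, ∀ w ∈ H.verts, u ≠ w → (∃ e, G.ends e = s(u, w)) →
    ∃ e ∈ H.edges, G.ends e = s(u, w))

/-- Compatibility of tubes: one properly contains the other, or they are disjoint
    and cannot be connected by a single edge of `G`. -/
def Compatible (G : Pseudograph V E) (H K : Piece V E) : Prop :=
  (H.Sub K ∧ H ≠ K) ∨ (K.Sub H ∧ K ≠ H) ∨
  (Disjoint H.verts K.verts ∧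
    ¬ ∃ e, ∃ u ∈ H.verts, ∃ w ∈ K.verts, G.ends e = s(u, w))

/-- Adjacency in the whole graph. -/
def adj (G : Pseudograph V E) (u w : V) : Prop := ∃ e, G.ends e = s(u, w)

/-- The connected component of `v`, as a piece. -/
def compPiece (G : Pseudograph V E) (v : V) : Piece V E :=
  ⟨{u | Relation.ReflTransGen G.adj v u},
   {e | ∀ u, u ∈ G.ends e → Relation.ReflTransGen G.adj v u}⟩

/-- A tubing: a set of pairwise compatible tubes not containing all component tubes. -/
def IsTubing (G : Pseudograph V E) (𝒯 : Set (Piece V E)) : Prop :=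
  (∀ H ∈ 𝒯, G.IsTube H) ∧
  (∀ H ∈ 𝒯, ∀ K ∈ 𝒯, H ≠ K → G.Compatible H K) ∧
  ¬ ∀ v : V, G.compPiece v ∈ 𝒯

/-- The poset of tubings of `G`, ordered by reverse inclusion. -/
def Tubing (G : Pseudograph V E) := {𝒯 : Set (Piece V E) // G.IsTubing 𝒯}

instance (G : Pseudograph V E) : PartialOrder (G.Tubing) where
  le T T' := T'.1 ⊆ T.1
  le_refl T := subset_rfl
  le_trans T₁ T₂ T₃ h h' := fun x hx => h (h' hx)
  le_antisymm T₁ T₂ h h' := Subtype.ext (subset_antisymm h' h)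

end Pseudograph

namespace Pseudograph

variable {V E : Type}


/-- The pseudograph with two nodes and `n` parallel edges between them. -/
def banana (n : ℕ) : Pseudograph Bool (Fin n) := ⟨fun _ => s(false, true)⟩

/-- The complete simple graph on `n` nodes. -/
def complete (n : ℕ) : Pseudograph (Fin n) {p : Sym2 (Fin n) // ¬ p.IsDiag} :=
  ⟨fun e => e.1⟩

end Pseudograph

section Cliques

variable {α β γ α' β' : Type*}

def Cliques (r : α → α → Prop) : Type _ := {S : Set α // S.Pairwise r}

instance (r : α → α → Prop) : PartialOrder (Cliques r) :=
  PartialOrder.lift (fun S : Cliques r => OrderDual.toDual S.1) fun _ _ h => Subtype.ext h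

theorem Cliques.le_iff {r : α → α → Prop} {S T : Cliques r} : S ≤ T ↔ T.1 ⊆ S.1 := Iff.rfl

def Cliques.congr {r : α → α → Prop} {s : β → β → Prop} (e : α ≃ β)
    (h : ∀ x y, s (e x) (e y) ↔ r x y) : Cliques r ≃o Cliques s where
  toFun S := ⟨e '' S.1, e.injective.injOn.pairwise_image.2 fun x hx y hy hxy =>
    (h x y).2 (S.2 hx hy hxy)⟩
  invFun S := ⟨e.symm '' S.1, e.symm.injective.injOn.pairwise_image.2 fun x hx y hy hxy =>
    (h _ _).1 (by simpa using S.2 hx hy hxy)⟩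
  left_inv S := Subtype.ext (e.symm_image_image S.1)
  right_inv S := Subtype.ext (e.image_symm_image S.1)
  map_rel_iff' := (Set.image_subset_image_iff e.injective).trans Cliques.le_iff.symm

def Cliques.sumOrderIso {r : β ⊕ γ → β ⊕ γ → Prop} {rβ : β → β → Prop} {rγ : γ → γ → Prop}
    (hβ : ∀ b b', r (.inl b) (.inl b') ↔ rβ b b') (hγ : ∀ c c', r (.inr c) (.inr c') ↔ rγ c c')
    (hβγ : ∀ b c, r (.inl b) (.inr c) ∧ r (.inr c) (.inl b)) :
    Cliques r ≃o Cliques rβ × Cliques rγ where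
  toFun S :=
    (⟨Sum.inl ⁻¹' S.1, fun _ hb _ hb' hne => (hβ _ _).1 (S.2 hb hb' (Sum.inl_injective.ne hne))⟩,
     ⟨Sum.inr ⁻¹' S.1, fun _ hc _ hc' hne => (hγ _ _).1 (S.2 hc hc' (Sum.inr_injective.ne hne))⟩)
  invFun P := ⟨Set.sumEquiv.symm (P.1.1, P.2.1), by
    refine Set.pairwise_union.2 ⟨?_, ?_, ?_⟩
    · exact Sum.inl_injective.injOn.pairwise_image.2 fun b hb b' hb' hne =>
        (hβ b b').2 (P.1.2 hb hb' hne)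
    · exact Sum.inr_injective.injOn.pairwise_image.2 fun c hc c' hc' hne =>
        (hγ c c').2 (P.2.2 hc hc' hne)
    · rintro _ ⟨b, -, rfl⟩ _ ⟨c, -, rfl⟩ -
      exact hβγ b c⟩
  left_inv S := Subtype.ext (Set.sumEquiv.symm_apply_apply S.1)
  right_inv P := by
    have h := Set.sumEquiv.apply_symm_apply (P.1.1, P.2.1)
    exact Prod.ext (Subtype.ext (congrArg Prod.fst h)) (Subtype.ext (congrArg Prod.snd h))
  map_rel_iff' {S T} := Set.sumEquiv.le_iff_le (x := T.1) (y := S.1)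

def OrderIso.prodCongr [LE α] [LE α'] [LE β] [LE β'] (e₁ : α ≃o α') (e₂ : β ≃o β') :
    α × β ≃o α' × β' where
  toEquiv := e₁.toEquiv.prodCongr e₂.toEquiv
  map_rel_iff' := by simp [Prod.le_def]

end Cliques

theorem Set.exists_eq_singleton_of_card_eq_two {α : Type*} [Finite α] (hα : Nat.card α = 2)
    {S : Set α} (hne : S.Nonempty) (hnu : S ≠ Set.univ) : ∃ a, S = {a} := by
  have hpos := (Set.ncard_pos).2 hne
  have hlt := Set.ncard_lt_card hnu
  exact Set.ncard_eq_one.1 (by omega)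

theorem Piece.ext {V E : Type} {H K : Piece V E} (hv : H.verts = K.verts)
    (he : H.edges = K.edges) : H = K := by
  cases H; cases K; simp_all

namespace Pseudograph

variable {V E : Type}

abbrev Tube (G : Pseudograph V E) : Type := {H : Piece V E // G.IsTube H}

def inducedEdges (G : Pseudograph V E) (S : Set V) : Set E := {e | ∀ v ∈ G.ends e, v ∈ S}

theorem not_isTube_wholePiece (G : Pseudograph V E) : ¬ G.IsTube wholePiece :=
  fun h => h.2.2.1 rfl

theorem compPiece_eq_wholePiece {G : Pseudograph V E} {v : V}
    (hG : ∀ u, Relation.ReflTransGen G.adj v u) : G.compPiece v = wholePiece :=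
  Piece.ext (Set.eq_univ_of_forall hG) (Set.eq_univ_of_forall fun _ u _ => hG u)

theorem isTubing_iff {G : Pseudograph V E} {v : V} (hG : ∀ u, Relation.ReflTransGen G.adj v u)
    {𝒯 : Set (Piece V E)} :
    G.IsTubing 𝒯 ↔ (∀ H ∈ 𝒯, G.IsTube H) ∧ 𝒯.Pairwise G.Compatible := by
  refine ⟨fun h => ⟨h.1, h.2.1⟩, fun ⟨htube, hcomp⟩ => ⟨htube, hcomp, fun hall => ?_⟩⟩
  have h := htube _ (hall v)
  rw [compPiece_eq_wholePiece hG] at h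
  exact G.not_isTube_wholePiece h

def tubingOrderIso (G : Pseudograph V E) {v : V} (hG : ∀ u, Relation.ReflTransGen G.adj v u) :
    G.Tubing ≃o Cliques fun H K : G.Tube => G.Compatible H.1 K.1 where
  toFun 𝒯 := ⟨Subtype.val ⁻¹' 𝒯.1, fun _ hH _ hK hne =>
    𝒯.2.2.1 _ hH _ hK (Subtype.val_injective.ne hne)⟩
  invFun S := ⟨Subtype.val '' S.1, (isTubing_iff hG).2
    ⟨by rintro _ ⟨H, -, rfl⟩; exact H.2, Subtype.val_injective.injOn.pairwise_image.2 S.2⟩⟩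
  left_inv 𝒯 := Subtype.ext <|
    (Subtype.image_preimage_coe _ _).trans (Set.inter_eq_right.2 𝒯.2.1)
  right_inv S := Subtype.ext (Set.preimage_image_eq _ Subtype.val_injective)
  map_rel_iff' {𝒯 𝒰} := by
    change Subtype.val ⁻¹' 𝒰.1 ⊆ Subtype.val ⁻¹' 𝒯.1 ↔ 𝒰.1 ⊆ 𝒯.1
    exact Set.preimage_subset_preimage_iff fun H hH => ⟨⟨H, 𝒰.2.1 H hH⟩, rfl⟩

theorem isTube_of_adjIn {G : Pseudograph V E} {H : Piece V E}
    (hclosed : ∀ e ∈ H.edges, ∀ v ∈ G.ends e, v ∈ H.verts) (hne : H.verts.Nonempty)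
    (hprop : H ≠ wholePiece) (hadj : ∀ u ∈ H.verts, ∀ w ∈ H.verts, u ≠ w → G.adjIn H u w) :
    G.IsTube H := by
  refine ⟨hclosed, ⟨hne, fun u hu w hw => ?_⟩, hprop, fun u hu w hw huw _ => hadj u hu w hw huw⟩
  rcases eq_or_ne u w with rfl | huw
  · exact .refl
  · exact .single (hadj u hu w hw huw)

theorem not_compatible_singleton {G : Pseudograph V E} {u w : V} (hadj : u ≠ w → G.adj u w) :
    ¬ G.Compatible ⟨{u}, ∅⟩ ⟨{w}, ∅⟩ := by
  rintro (⟨⟨hs, -⟩, hne⟩ | ⟨⟨hs, -⟩, hne⟩ | ⟨hd, hnoedge⟩)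
  · exact hne (by rw [Set.singleton_subset_singleton.1 hs])
  · exact hne (by rw [Set.singleton_subset_singleton.1 hs])
  · obtain ⟨e, he⟩ := hadj (Set.disjoint_singleton.1 hd)
    exact hnoedge ⟨e, u, rfl, w, rfl, he⟩

section Complete

variable {m : ℕ}

theorem complete_adj {u w : Fin m} (h : u ≠ w) : (complete m).adj u w :=
  ⟨⟨s(u, w), Sym2.mk_isDiag_iff.not.2 h⟩, rfl⟩

theorem complete_reachable (v u : Fin m) : Relation.ReflTransGen (complete m).adj v u := by
  rcases eq_or_ne v u with rfl | h
  · exact .refl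
  · exact .single (complete_adj h)

theorem isTube_complete_iff {K : Piece (Fin m) {p : Sym2 (Fin m) // ¬ p.IsDiag}} :
    (complete m).IsTube K ↔
      K.verts.Nonempty ∧ K.verts ≠ Set.univ ∧ K.edges = (complete m).inducedEdges K.verts := by
  constructor
  · rintro ⟨hclosed, ⟨hne, -⟩, hprop, hfill⟩
    have hedges : K.edges = (complete m).inducedEdges K.verts := by
      refine subset_antisymm hclosed fun ⟨p, hp⟩ he => ?_
      induction p using Sym2.ind with | _ u w => ?_
      have huw : u ≠ w := Sym2.mk_isDiag_iff.not.1 hp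
      obtain ⟨e, he', hee⟩ := hfill u (he u (Sym2.mem_mk_left u w)) w
        (he w (Sym2.mem_mk_right u w)) huw (complete_adj huw)
      rwa [← (Subtype.ext hee : e = ⟨s(u, w), hp⟩)]
    refine ⟨hne, fun huniv => hprop (Piece.ext huniv ?_), hedges⟩
    rw [hedges, huniv]
    exact Set.eq_univ_of_forall fun _ _ _ => trivial
  · rintro ⟨hne, hnu, hedges⟩
    refine isTube_of_adjIn (hedges ▸ fun _ he => he) hne (fun h => hnu (congrArg Piece.verts h))
      fun u hu w hw huw => ⟨⟨s(u, w), Sym2.mk_isDiag_iff.not.2 huw⟩, ?_, rfl⟩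
    rw [hedges]
    intro v hv
    rcases Sym2.mem_iff.1 hv with rfl | rfl <;> assumption

theorem complete_tube_ext {K K' : Piece (Fin m) {p : Sym2 (Fin m) // ¬ p.IsDiag}}
    (hK : (complete m).IsTube K) (hK' : (complete m).IsTube K') (h : K.verts = K'.verts) :
    K = K' :=
  Piece.ext h (by rw [(isTube_complete_iff.1 hK).2.2, (isTube_complete_iff.1 hK').2.2, h])

theorem compatible_complete_iff {K K' : Piece (Fin m) {p : Sym2 (Fin m) // ¬ p.IsDiag}}
    (hK : (complete m).IsTube K) (hK' : (complete m).IsTube K') :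
    (complete m).Compatible K K' ↔ K.verts ⊂ K'.verts ∨ K'.verts ⊂ K.verts := by
  have hstrict : ∀ {L L'}, (complete m).IsTube L → (complete m).IsTube L' →
      (L.Sub L' ∧ L ≠ L' ↔ L.verts ⊂ L'.verts) := by
    intro L L' hL hL'
    rw [Set.ssubset_iff_subset_ne, Piece.Sub, (isTube_complete_iff.1 hL).2.2,
      (isTube_complete_iff.1 hL').2.2]
    constructor
    · rintro ⟨⟨hv, -⟩, hne⟩
      exact ⟨hv, fun h => hne (complete_tube_ext hL hL' h)⟩
    · rintro ⟨hv, hne⟩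
      exact ⟨⟨hv, fun e he x hx => hv (he x hx)⟩, fun h => hne (h ▸ rfl)⟩
  have hjoined : ¬ (Disjoint K.verts K'.verts ∧
      ¬ ∃ e, ∃ u ∈ K.verts, ∃ w ∈ K'.verts, (complete m).ends e = s(u, w)) := by
    rintro ⟨hd, hnoedge⟩
    obtain ⟨⟨u, hu⟩, -⟩ := isTube_complete_iff.1 hK
    obtain ⟨⟨w, hw⟩, -⟩ := isTube_complete_iff.1 hK'
    obtain ⟨e, he⟩ := complete_adj (Set.disjoint_iff_forall_ne.1 hd hu hw)
    exact hnoedge ⟨e, u, hu, w, hw, he⟩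
  rw [Compatible, hstrict hK hK', hstrict hK' hK, or_iff_left hjoined]

theorem inducedEdges_complete_singleton (v : Fin m) :
    (complete m).inducedEdges {v} = ∅ := by
  refine Set.eq_empty_of_forall_notMem fun ⟨p, hp⟩ he => hp ?_
  induction p using Sym2.ind with | _ u w => ?_
  exact Sym2.mk_isDiag_iff.2 ((Set.mem_singleton_iff.1 (he u (Sym2.mem_mk_left u w))).trans
    (Set.mem_singleton_iff.1 (he w (Sym2.mem_mk_right u w))).symm)

theorem isTube_complete_two_iff {K : Piece (Fin 2) {p : Sym2 (Fin 2) // ¬ p.IsDiag}} :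
    (complete 2).IsTube K ↔ ∃ v, K = ⟨{v}, ∅⟩ := by
  rw [isTube_complete_iff]
  constructor
  · rintro ⟨hne, hnu, hedges⟩
    obtain ⟨v, hv⟩ := Set.exists_eq_singleton_of_card_eq_two (by simp) hne hnu
    exact ⟨v, Piece.ext hv (by rw [hedges, hv, inducedEdges_complete_singleton])⟩
  · rintro ⟨v, rfl⟩
    exact ⟨Set.singleton_nonempty v, Set.singleton_ne_univ v,
      (inducedEdges_complete_singleton v).symm⟩

end Complete

section Banana

variable {n : ℕ}

theorem banana_adj (hn : 1 ≤ n) {u w : Bool} (h : u ≠ w) : (banana n).adj u w :=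
  ⟨⟨0, hn⟩, by cases u <;> cases w <;> simp_all [banana, Sym2.eq_swap]⟩

theorem banana_reachable (hn : 1 ≤ n) (u : Bool) :
    Relation.ReflTransGen (banana n).adj false u := by
  cases u
  · exact .refl
  · exact .single (banana_adj hn Bool.false_ne_true)

theorem isTube_banana_singleton (b : Bool) : (banana n).IsTube ⟨{b}, ∅⟩ :=
  isTube_of_adjIn (fun _ he => he.elim) (Set.singleton_nonempty b)
    (fun h => Set.singleton_ne_univ b (congrArg Piece.verts h))
    fun _ hu _ hw huw => (huw (hu.trans hw.symm)).elim

theorem isTube_banana_univ {A : Set (Fin n)} (hne : A.Nonempty) (hnu : A ≠ Set.univ) :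
    (banana n).IsTube ⟨Set.univ, A⟩ :=
  isTube_of_adjIn (fun _ _ _ _ => trivial) Set.univ_nonempty
    (fun h => hnu (congrArg Piece.edges h)) fun u _ w _ huw =>
      ⟨hne.some, hne.some_mem, by cases u <;> cases w <;> simp_all [banana, Sym2.eq_swap]⟩

theorem banana_tube_cases (hn : 1 ≤ n) {H : Piece Bool (Fin n)} (hH : (banana n).IsTube H) :
    (∃ b, H = ⟨{b}, ∅⟩) ∨ (H.verts = Set.univ ∧ H.edges.Nonempty ∧ H.edges ≠ Set.univ) := by
  obtain ⟨hclosed, ⟨hne, -⟩, hprop, hfill⟩ := hH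
  rcases H.edges.eq_empty_or_nonempty with hempty | ⟨e, he⟩
  · have hnu : H.verts ≠ Set.univ := fun huniv => by
      obtain ⟨e, he, -⟩ := hfill false (huniv ▸ trivial) true (huniv ▸ trivial)
        Bool.false_ne_true (banana_adj hn Bool.false_ne_true)
      exact (hempty ▸ he : e ∈ (∅ : Set (Fin n)))
    obtain ⟨b, hb⟩ := Set.exists_eq_singleton_of_card_eq_two (by simp) hne hnu
    exact .inl ⟨b, Piece.ext hb hempty⟩
  · have huniv : H.verts = Set.univ := Set.eq_univ_of_forall fun b =>
      hclosed e he b (by cases b <;> simp [banana])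
    exact .inr ⟨huniv, ⟨e, he⟩, fun h => hprop (Piece.ext huniv h)⟩

theorem compatible_banana_univ_iff {A A' : Set (Fin n)} :
    (banana n).Compatible ⟨Set.univ, A⟩ ⟨Set.univ, A'⟩ ↔ A ⊂ A' ∨ A' ⊂ A := by
  have hstrict : ∀ {B B' : Set (Fin n)}, Piece.Sub (⟨Set.univ, B⟩ : Piece Bool (Fin n))
      ⟨Set.univ, B'⟩ ∧ (⟨Set.univ, B⟩ : Piece Bool (Fin n)) ≠ ⟨Set.univ, B'⟩ ↔ B ⊂ B' := by
    intro B B'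
    simp [Piece.Sub, Set.ssubset_iff_subset_ne]
  rw [Compatible, hstrict, hstrict]
  exact or_congr_right (or_iff_left fun h => Set.univ_nonempty.ne_empty (disjoint_self.1 h.1))

def bigTube (K : (complete n).Tube) : (banana n).Tube :=
  ⟨⟨Set.univ, K.1.verts⟩,
    isTube_banana_univ (isTube_complete_iff.1 K.2).1 (isTube_complete_iff.1 K.2).2.1⟩

def smallTube (K : (complete 2).Tube) : (banana n).Tube :=
  ⟨⟨finTwoEquiv '' K.1.verts, ∅⟩, by
    obtain ⟨v, hv⟩ := isTube_complete_two_iff.1 K.2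
    rw [hv, Set.image_singleton]
    exact isTube_banana_singleton _⟩

theorem smallTube_ne_bigTube (K : (complete 2).Tube) (L : (complete n).Tube) :
    (smallTube K).1 ≠ (bigTube L).1 := fun h => by
  obtain ⟨v, hv⟩ := isTube_complete_two_iff.1 K.2
  exact Set.singleton_ne_univ (finTwoEquiv v)
    (by simpa [smallTube, bigTube, hv] using congrArg Piece.verts h)

theorem bijective_sumElim_bigTube_smallTube (hn : 1 ≤ n) :
    Function.Bijective (Sum.elim bigTube smallTube :
      (complete n).Tube ⊕ (complete 2).Tube → (banana n).Tube) := by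
  refine ⟨Function.Injective.sumElim ?_ ?_ fun L K h =>
    smallTube_ne_bigTube K L (congrArg Subtype.val h).symm, ?_⟩
  · intro K K' h
    exact Subtype.ext (complete_tube_ext K.2 K'.2 (congrArg (fun H => H.1.edges) h))
  · intro K K' h
    exact Subtype.ext (complete_tube_ext K.2 K'.2
      (finTwoEquiv.injective.image_injective (congrArg (fun H => H.1.verts) h)))
  · rintro ⟨H, hH⟩
    rcases banana_tube_cases hn hH with ⟨b, rfl⟩ | ⟨huniv, hne, hnu⟩
    · refine ⟨.inr ⟨⟨{finTwoEquiv.symm b}, ∅⟩, isTube_complete_two_iff.2 ⟨_, rfl⟩⟩,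
        Subtype.ext (Piece.ext ?_ rfl)⟩
      simp [smallTube]
    · exact ⟨.inl ⟨⟨H.edges, (complete n).inducedEdges H.edges⟩,
        isTube_complete_iff.2 ⟨hne, hnu, rfl⟩⟩, Subtype.ext (Piece.ext huniv.symm rfl)⟩

theorem compatible_bigTube_iff (K K' : (complete n).Tube) :
    (banana n).Compatible (bigTube K).1 (bigTube K').1 ↔ (complete n).Compatible K.1 K'.1 :=
  compatible_banana_univ_iff.trans (compatible_complete_iff K.2 K'.2).symm

theorem compatible_smallTube_iff (hn : 1 ≤ n) (K K' : (complete 2).Tube) :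
    (banana n).Compatible (smallTube K).1 (smallTube K').1 ↔
      (complete 2).Compatible K.1 K'.1 := by
  obtain ⟨v, hv⟩ := isTube_complete_two_iff.1 K.2
  obtain ⟨v', hv'⟩ := isTube_complete_two_iff.1 K'.2
  simp only [smallTube, hv, hv', Set.image_singleton]
  exact iff_of_false (not_compatible_singleton (banana_adj hn))
    (not_compatible_singleton complete_adj)

theorem compatible_bigTube_smallTube (K : (complete n).Tube) (L : (complete 2).Tube) :
    (banana n).Compatible (bigTube K).1 (smallTube L).1 ∧
      (banana n).Compatible (smallTube L).1 (bigTube K).1 := by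
  have hsub : (smallTube L).1.Sub (bigTube K).1 := ⟨Set.subset_univ _, Set.empty_subset _⟩
  exact ⟨.inr (.inl ⟨hsub, smallTube_ne_bigTube L K⟩), .inl ⟨hsub, smallTube_ne_bigTube L K⟩⟩

end Banana

/-- The poset of tubings of the two-node `n`-banana is isomorphic to the product of the
posets of tubings of the complete graph `Γ_n` and of the complete graph `Γ_2`. -/
theorem banana_tubings (n : ℕ) (hn : 1 ≤ n) :
    Nonempty ((banana n).Tubing ≃o ((complete n).Tubing × (complete 2).Tubing)) :=
  ⟨((banana n).tubingOrderIso (banana_reachable hn)).trans <|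
    (Cliques.congr (Equiv.ofBijective _ (bijective_sumElim_bigTube_smallTube hn))
      fun _ _ => Iff.rfl).symm.trans <|
    (Cliques.sumOrderIso compatible_bigTube_iff (compatible_smallTube_iff hn)
      compatible_bigTube_smallTube).trans <|
    OrderIso.prodCongr ((complete n).tubingOrderIso (complete_reachable ⟨0, hn⟩)).symm
      ((complete 2).tubingOrderIso (complete_reachable 0)).symm⟩

end Pseudograph
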